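/- Let x = (x₁,x₂) with irrational slope ξ, |ξ| < 1, and y = (y₁,y₂), y₂ ≠ 0, with rational slope a/b in lowest terms, |a| ≤ b. Then for all sufficiently large k there exists γ ∈ SL(2,ℤ) with (|y₂|/(2|x₂|)) q_{k−1} q_k ≤ |γ| ≤ (3|y₂|/|x₂|) q_{k−1} q_k and |γx − y| ≤ 2b|x₂|/q_k. -/

import Mathlib

/-
Put `ξ = x₁ / x₂`, `c = y₂ / x₂` and let `p/q = p_{k-1}/q_{k-1}`, `p'/q' = p_k/q_k`. The
unimodular matrix `C = [[q, -p], [q', -p']]` maps `x` to `x₂ (θ, θ')` with `θ = qξ - p`,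
`θ' = q'ξ - p'`, where `|θ| ≤ 1/q'` and `|θ'| ≤ 1/(q + q')`; the determinant identity forces
`|θ| ≥ 1/(q + q')`. Take `γ = A C` with `A = [[w, ±a], [N, ±b]]` and `aN - bw = 1`: the second
coordinate of `γx - y` is `x₂ (Nθ ± bθ' - c)`, and `N` ranges over a residue class mod `b`, so it
can be chosen with error at most `b|θ|/2 ≤ b/(2q')`. Then `|N| ≍ |c| / |θ| ≍ |c| q'`, which gives
`|γ| ≍ |N| q ≍ |c| q q'`, while the first coordinate is controlled through `y₁ = (a/b) y₂`.
-/

open Matrix MeasureTheory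

/-- Denominator `q k` of the `k`-th convergent of the continued fraction of `ξ`. -/
noncomputable def qden (ξ : ℝ) (k : ℕ) : ℝ := (GenContFract.of ξ).dens k

/-- Numerator `p k` of the `k`-th convergent of the continued fraction of `ξ`. -/
noncomputable def pnum (ξ : ℝ) (k : ℕ) : ℝ := (GenContFract.of ξ).nums k

/-- Action of an integer matrix on `ℝ²` by left multiplication. -/
noncomputable def act (g : Matrix (Fin 2) (Fin 2) ℤ) (x : Fin 2 → ℝ) : Fin 2 → ℝ :=
  (g.map (Int.cast : ℤ → ℝ)).mulVec x

/-- Sup norm of an integer `2 × 2` matrix. -/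
noncomputable def mnorm (g : Matrix (Fin 2) (Fin 2) ℤ) : ℝ :=
  max (max |(g 0 0 : ℝ)| |(g 0 1 : ℝ)|) (max |(g 1 0 : ℝ)| |(g 1 1 : ℝ)|)

/-- Sup norm on `ℝ²`. -/
noncomputable def vnorm (v : Fin 2 → ℝ) : ℝ := max |v 0| |v 1|

/-- The set of exponents `w` such that `|v α + u| ≤ |v| ^ (-w)` has infinitely many
integer solutions `(v, u)`; its supremum is the irrationality measure `ω(α)`. -/
def omegaSet (α : ℝ) : Set ℝ :=
  {w : ℝ | {p : ℤ × ℤ | |(p.1 : ℝ) * α + (p.2 : ℝ)| ≤ |(p.1 : ℝ)| ^ (-w)}.Infinite}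

/-- The set of exponents `μ` such that `|γ x - y| ≤ |γ| ^ (-μ)` for infinitely many
`γ ∈ SL(2, ℤ)`; its supremum is `μ(x, y)`. -/
def muSet (x y : Fin 2 → ℝ) : Set ℝ :=
  {μ : ℝ | {γ : Matrix (Fin 2) (Fin 2) ℤ |
    γ.det = 1 ∧ vnorm (act γ x - y) ≤ mnorm γ ^ (-μ)}.Infinite}

/-- The set of exponents `μ` such that for all sufficiently large `T` there is
`γ ∈ SL(2, ℤ)` with `|γ| ≤ T` and `|γ x - y| ≤ T ^ (-μ)`; its supremum is `μ̂(x, y)`. -/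
def muHatSet (x y : Fin 2 → ℝ) : Set ℝ :=
  {μ : ℝ | ∃ T₀ : ℝ, ∀ T : ℝ, T₀ ≤ T → ∃ γ : Matrix (Fin 2) (Fin 2) ℤ,
    γ.det = 1 ∧ mnorm γ ≤ T ∧ vnorm (act γ x - y) ≤ T ^ (-μ)}

open GenContFract Filter

section ContinuedFraction

lemma contsAux_mem_range_intCast (ξ : ℝ) (m : ℕ) :
    ((GenContFract.of ξ).contsAux m).a ∈ (Int.castRingHom ℝ).range ∧
      ((GenContFract.of ξ).contsAux m).b ∈ (Int.castRingHom ℝ).range := by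
  induction m using Nat.twoStepInduction with
  | zero => exact ⟨one_mem _, zero_mem _⟩
  | one => exact ⟨⟨⌊ξ⌋, by simp [contsAux, of_h_eq_floor]⟩, one_mem _⟩
  | more n ih₀ ih₁ =>
    rcases hs : (GenContFract.of ξ).s.get? n with _ | gp
    · simpa [contsAux, hs] using ih₁
    · obtain ⟨ha, z, hz⟩ := of_partNum_eq_one_and_exists_int_partDen_eq hs
      have hz : gp.b ∈ (Int.castRingHom ℝ).range := ⟨z, hz.symm⟩
      rw [contsAux_recurrence hs rfl rfl, ha, one_mul, one_mul]
      exact ⟨add_mem (mul_mem hz ih₁.1) ih₀.1, add_mem (mul_mem hz ih₁.2) ih₀.2⟩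

lemma exists_int_pnum_eq (ξ : ℝ) (n : ℕ) : ∃ P : ℤ, pnum ξ n = P := by
  obtain ⟨P, hP⟩ := (contsAux_mem_range_intCast ξ (n + 1)).1
  exact ⟨P, hP.symm⟩

lemma exists_int_qden_eq (ξ : ℝ) (n : ℕ) : ∃ Q : ℤ, qden ξ n = Q := by
  obtain ⟨Q, hQ⟩ := (contsAux_mem_range_intCast ξ (n + 1)).2
  exact ⟨Q, hQ.symm⟩

lemma qden_le_qden_succ (ξ : ℝ) (n : ℕ) : qden ξ n ≤ qden ξ (n + 1) :=
  of_den_mono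

variable {ξ : ℝ}

lemma Irrational.not_terminatedAt_of (hξ : Irrational ξ) (n : ℕ) :
    ¬(GenContFract.of ξ).TerminatedAt n :=
  fun h ↦ let ⟨q, hq⟩ := (terminates_iff_rat ξ).1 ⟨n, h⟩; hξ ⟨q, hq.symm⟩

lemma natCast_le_qden (hξ : Irrational ξ) (n : ℕ) : (n : ℝ) ≤ qden ξ n := by
  have hfib : (n + 1 : ℝ) ≤ Nat.fib (n + 1) + 1 := by exact_mod_cast Nat.le_fib_add_one (n + 1)
  have := succ_nth_fib_le_of_nth_den (n := n) (Or.inr (hξ.not_terminatedAt_of (n - 1)))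
  unfold qden
  linarith

lemma one_le_qden (hξ : Irrational ξ) (n : ℕ) : 1 ≤ qden ξ n := by
  have := succ_nth_fib_le_of_nth_den (n := n) (Or.inr (hξ.not_terminatedAt_of (n - 1)))
  have : (1 : ℝ) ≤ Nat.fib (n + 1) := by exact_mod_cast Nat.fib_pos.2 n.succ_pos
  unfold qden
  linarith

lemma tendsto_qden_atTop (hξ : Irrational ξ) : Tendsto (qden ξ) atTop atTop :=
  tendsto_atTop_mono (natCast_le_qden hξ) tendsto_natCast_atTop_atTop

lemma qden_add_qden_succ_le (hξ : Irrational ξ) (n : ℕ) :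
    qden ξ n + qden ξ (n + 1) ≤ qden ξ (n + 2) := by
  obtain ⟨gp, hgp⟩ := Option.ne_none_iff_exists'.1 (hξ.not_terminatedAt_of (n + 1))
  have ha : gp.a = 1 := of_partNum_eq_one (partNum_eq_s_a hgp)
  have hb : 1 ≤ gp.b := of_one_le_get?_partDen (partDen_eq_s_b hgp)
  have h₁ := one_le_qden hξ (n + 1)
  unfold qden at *
  rw [dens_recurrence hgp rfl rfl, ha, one_mul]
  nlinarith

lemma abs_qden_mul_sub_pnum_mul_qden_succ_le (hξ : Irrational ξ) (n : ℕ) :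
    |qden ξ n * ξ - pnum ξ n| * qden ξ (n + 1) ≤ 1 := by
  have h := abs_sub_convs_le (hξ.not_terminatedAt_of n)
  have h₀ := one_le_qden hξ n
  have h₁ := one_le_qden hξ (n + 1)
  unfold qden pnum at *
  rw [conv_eq_num_div_den] at h
  set p := (GenContFract.of ξ).nums n
  set q := (GenContFract.of ξ).dens n
  set q' := (GenContFract.of ξ).dens (n + 1)
  calc |q * ξ - p| * q' = |ξ - p / q| * (q * q') := by
        rw [show q * ξ - p = q * (ξ - p / q) by field_simp, abs_mul, abs_of_pos (by positivity)]
        ring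
    _ ≤ 1 / (q * q') * (q * q') := by gcongr
    _ = 1 := by field_simp

lemma pnum_mul_qden_succ_sub_qden_mul_pnum_succ (hξ : Irrational ξ) (n : ℕ) :
    pnum ξ n * qden ξ (n + 1) - qden ξ n * pnum ξ (n + 1) = (-1) ^ (n + 1) :=
  SimpContFract.determinant (s := ⟨GenContFract.of ξ, of_isSimpContFract ξ⟩)
    (hξ.not_terminatedAt_of n)

lemma exists_int_consecutive_convergents (hξ : Irrational ξ) (n : ℕ) :
    ∃ P₁ Q₁ P₂ Q₂ : ℤ, qden ξ n = Q₁ ∧ qden ξ (n + 1) = Q₂ ∧ 0 < Q₁ ∧ Q₁ ≤ Q₂ ∧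
      IsUnit (P₁ * Q₂ - Q₁ * P₂) ∧ |Q₁ * ξ - P₁| * Q₂ ≤ 1 ∧ |Q₂ * ξ - P₂| * (Q₁ + Q₂) ≤ 1 := by
  obtain ⟨P₁, hP₁⟩ := exists_int_pnum_eq ξ n
  obtain ⟨Q₁, hQ₁⟩ := exists_int_qden_eq ξ n
  obtain ⟨P₂, hP₂⟩ := exists_int_pnum_eq ξ (n + 1)
  obtain ⟨Q₂, hQ₂⟩ := exists_int_qden_eq ξ (n + 1)
  have hdet : P₁ * Q₂ - Q₁ * P₂ = (-1) ^ (n + 1) := by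
    exact_mod_cast hP₁ ▸ hQ₁ ▸ hP₂ ▸ hQ₂ ▸ pnum_mul_qden_succ_sub_qden_mul_pnum_succ hξ n
  refine ⟨P₁, Q₁, P₂, Q₂, hQ₁, hQ₂, ?_, ?_, hdet ▸ isUnit_neg_one.pow _,
    hP₁ ▸ hQ₁ ▸ hQ₂ ▸ abs_qden_mul_sub_pnum_mul_qden_succ_le hξ n, ?_⟩
  · exact_mod_cast hQ₁ ▸ one_pos.trans_le (one_le_qden hξ n)
  · exact_mod_cast hQ₁ ▸ hQ₂ ▸ qden_le_qden_succ ξ n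
  · calc |Q₂ * ξ - P₂| * (Q₁ + Q₂) ≤ |Q₂ * ξ - P₂| * qden ξ (n + 2) := by
          gcongr
          exact hQ₁ ▸ hQ₂ ▸ qden_add_qden_succ_le hξ n
      _ ≤ 1 := hP₂ ▸ hQ₂ ▸ abs_qden_mul_sub_pnum_mul_qden_succ_le hξ (n + 1)

end ContinuedFraction

section SupNorms

lemma act_apply (g : Matrix (Fin 2) (Fin 2) ℤ) (x : Fin 2 → ℝ) (i : Fin 2) :
    act g x i = g i 0 * x 0 + g i 1 * x 1 := by
  simp [act, Matrix.mulVec, dotProduct, Fin.sum_univ_two]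

lemma abs_apply_le_mnorm (g : Matrix (Fin 2) (Fin 2) ℤ) (i j : Fin 2) :
    |(g i j : ℝ)| ≤ mnorm g := by
  unfold mnorm
  fin_cases i <;> fin_cases j <;> simp

lemma mnorm_le {g : Matrix (Fin 2) (Fin 2) ℤ} {r : ℝ} (h : ∀ i j, |(g i j : ℝ)| ≤ r) :
    mnorm g ≤ r :=
  max_le (max_le (h 0 0) (h 0 1)) (max_le (h 1 0) (h 1 1))

lemma mnorm_mul_le {A C : Matrix (Fin 2) (Fin 2) ℤ} {α β M₁ M₂ : ℝ}
    (hA₀ : ∀ i, |(A i 0 : ℝ)| ≤ α) (hA₁ : ∀ i, |(A i 1 : ℝ)| ≤ β)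
    (hC₀ : ∀ j, |(C 0 j : ℝ)| ≤ M₁) (hC₁ : ∀ j, |(C 1 j : ℝ)| ≤ M₂) :
    mnorm (A * C) ≤ α * M₁ + β * M₂ := by
  refine mnorm_le fun i j ↦ ?_
  have hα : 0 ≤ α := (abs_nonneg _).trans (hA₀ i)
  have hβ : 0 ≤ β := (abs_nonneg _).trans (hA₁ i)
  simp only [Matrix.mul_apply, Fin.sum_univ_two, Int.cast_add, Int.cast_mul]
  calc _ ≤ |(A i 0 : ℝ)| * |(C 0 j : ℝ)| + |(A i 1 : ℝ)| * |(C 1 j : ℝ)| := by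
        simpa only [abs_mul] using abs_add_le ((A i 0 : ℝ) * C 0 j) ((A i 1 : ℝ) * C 1 j)
    _ ≤ α * M₁ + β * M₂ := by
        gcongr
        exacts [hA₀ i, hC₀ j, hA₁ i, hC₁ j]

end SupNorms

section Approximation

lemma IsCoprime.exists_dvd_mul_sub_one_abs_mul_sub_le {a b : ℤ} (hab : IsCoprime a b)
    (hb : 0 < b) {θ : ℝ} (hθ : θ ≠ 0) (u : ℝ) :
    ∃ N : ℤ, b ∣ a * N - 1 ∧ |N * θ - u| ≤ b * |θ| / 2 := by
  obtain ⟨v, w, hvw⟩ := hab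
  have hb' : (0 : ℝ) < b := by exact_mod_cast hb
  set t := (u - v * θ) / (b * θ)
  refine ⟨v + b * round t, ⟨a * round t - w, by linear_combination hvw⟩, ?_⟩
  have ht : (b : ℝ) * θ * t = u - v * θ := mul_div_cancel₀ _ (by positivity)
  have key : ((v + b * round t : ℤ) : ℝ) * θ - u = b * θ * (round t - t) := by
    push_cast
    linear_combination ht
  rw [key, abs_mul, abs_mul, abs_of_pos hb', abs_sub_comm]
  calc (b : ℝ) * |θ| * |t - round t| ≤ b * |θ| * (1 / 2) := by gcongr; exact abs_sub_round t
    _ = b * |θ| / 2 := by ring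

lemma one_le_abs_mul_add_of_abs_sub_eq_one {Q₁ Q₂ θ₁ θ₂ : ℝ} (hQ₁ : 0 ≤ Q₁) (hQ₂ : 0 < Q₂)
    (h : |Q₂ * θ₁ - Q₁ * θ₂| = 1) (hθ₂ : |θ₂| * (Q₁ + Q₂) ≤ 1) : 1 ≤ |θ₁| * (Q₁ + Q₂) := by
  have h₁ : 1 ≤ Q₂ * |θ₁| + Q₁ * |θ₂| := by
    calc 1 = |Q₂ * θ₁ - Q₁ * θ₂| := h.symm
      _ ≤ |Q₂ * θ₁| + |Q₁ * θ₂| := abs_sub _ _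
      _ = Q₂ * |θ₁| + Q₁ * |θ₂| := by rw [abs_mul, abs_mul, abs_of_pos hQ₂, abs_of_nonneg hQ₁]
  by_contra! hlt
  nlinarith [abs_nonneg θ₁, abs_nonneg θ₂, mul_le_mul_of_nonneg_left hθ₂ hQ₁,
    mul_le_mul_of_nonneg_right h₁ (add_nonneg hQ₁ hQ₂.le), mul_lt_mul_of_pos_left hlt hQ₂]

lemma abs_le_of_abs_mul_sub_le_one {ξ : ℝ} (hξ : |ξ| < 1) {P Q : ℤ} (hQ : 0 < Q)
    (h : |Q * ξ - P| ≤ 1) : |P| ≤ Q := by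
  have hQ' : (0 : ℝ) < Q := by exact_mod_cast hQ
  have : ((|P| : ℤ) : ℝ) < Q + 1 := by
    calc ((|P| : ℤ) : ℝ) = |Q * ξ - (Q * ξ - P)| := by push_cast; rw [sub_sub_cancel]
      _ ≤ |(Q : ℝ) * ξ| + |Q * ξ - P| := abs_sub _ _
      _ < Q + 1 := by rw [abs_mul, abs_of_pos hQ']; nlinarith
  exact Int.lt_add_one_iff.1 (by exact_mod_cast this)

lemma abs_mem_Icc_of_abs_mul_add_mul_sub_le {n e c θ₁ θ₂ b Q₁ Q₂ : ℝ} (he : |e| = b)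
    (h : |n * θ₁ + e * θ₂ - c| ≤ b * |θ₁| / 2) (hQ₁ : 0 ≤ Q₁) (hQ : Q₁ ≤ Q₂)
    (hθ₁ : |θ₁| * Q₂ ≤ 1) (hθ₂ : |θ₂| * (Q₁ + Q₂) ≤ 1) (hθ₁' : 1 ≤ |θ₁| * (Q₁ + Q₂)) :
    |n| ∈ Set.Icc (|c| * Q₂ - 3 / 2 * b) (2 * |c| * Q₂ + 2 * b) := by
  have hb : 0 ≤ b := he ▸ abs_nonneg e
  have key : |(|n| * |θ₁| - |c|)| ≤ b * |θ₂| + b * |θ₁| / 2 := by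
    calc |(|n| * |θ₁| - |c|)| ≤ |n * θ₁ - c| := by
          rw [← abs_mul]; exact abs_abs_sub_abs_le_abs_sub _ _
      _ = |(n * θ₁ + e * θ₂ - c) - e * θ₂| := by congr 1; ring
      _ ≤ |n * θ₁ + e * θ₂ - c| + |e * θ₂| := abs_sub _ _
      _ ≤ b * |θ₂| + b * |θ₁| / 2 := by rw [abs_mul, he]; linarith
  obtain ⟨hlow, hup⟩ := abs_le.1 key
  have hθ₂' : |θ₂| * Q₂ ≤ 1 := by nlinarith [abs_nonneg θ₂]
  constructor
  · nlinarith [abs_nonneg n, abs_nonneg θ₁, abs_nonneg θ₂,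
      mul_le_mul_of_nonneg_left hθ₁ (abs_nonneg n)]
  · have hθ₁Q₁ : |θ₁| * Q₁ ≤ 1 := by nlinarith [abs_nonneg θ₁]
    nlinarith [abs_nonneg n, abs_nonneg c, mul_le_mul_of_nonneg_left hθ₁' (abs_nonneg n),
      mul_le_mul_of_nonneg_right hup (add_nonneg hQ₁ (hQ₁.trans hQ)),
      mul_le_mul_of_nonneg_left hθ₂ hb, mul_le_mul_of_nonneg_left hQ (abs_nonneg c),
      mul_le_mul_of_nonneg_left (add_le_add hθ₁Q₁ hθ₁) hb]

lemma vnorm_act_mul_sub_le {ξ c : ℝ} {P₁ Q₁ P₂ Q₂ a b N w s : ℤ} (hb : 0 < b) (hab' : |a| ≤ b)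
    (hw : a * N - 1 = b * w) (hQ₂ : 0 < Q₂) (hθ₁ : |Q₁ * ξ - P₁| * Q₂ ≤ 1)
    (hN : |N * (Q₁ * ξ - P₁) + b * s * (Q₂ * ξ - P₂) - c| ≤ b * |Q₁ * ξ - P₁| / 2)
    {x y : Fin 2 → ℝ} (hx : x 0 = ξ * x 1) (hy : y 1 = c * x 1) (hslope : y 0 * b = y 1 * a) :
    vnorm (act (!![w, a * s; N, b * s] * !![Q₁, -P₁; Q₂, -P₂]) x - y) ≤ 2 * b * |x 1| / Q₂ := by
  set θ₁ : ℝ := Q₁ * ξ - P₁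
  set D : ℝ := N * θ₁ + b * s * (Q₂ * ξ - P₂) - c
  have hb' : (1 : ℝ) ≤ b := by exact_mod_cast hb
  have ha' : |(a : ℝ)| ≤ b := by exact_mod_cast hab'
  have hQ₂' : (0 : ℝ) < Q₂ := by exact_mod_cast hQ₂
  have hw' : (a : ℝ) * N - 1 = b * w := by exact_mod_cast hw
  have h₁ : (act (!![w, a * s; N, b * s] * !![Q₁, -P₁; Q₂, -P₂]) x - y) 1 = x 1 * D := by
    simp only [mul_fin_two, Pi.sub_apply, act_apply, of_apply, cons_val', cons_val_zero,
      cons_val_one, cons_val_fin_one, Int.cast_add, Int.cast_mul, Int.cast_neg, hx, hy, D, θ₁]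
    ring
  have h₀ : b * (act (!![w, a * s; N, b * s] * !![Q₁, -P₁; Q₂, -P₂]) x - y) 0 =
      x 1 * (a * D - θ₁) := by
    simp only [mul_fin_two, Pi.sub_apply, act_apply, of_apply, cons_val', cons_val_zero,
      cons_val_one, cons_val_fin_one, Int.cast_add, Int.cast_mul, Int.cast_neg, hx, D, θ₁]
    linear_combination -(x 1 * θ₁) * hw' - hslope - (a : ℝ) * hy
  have hb₀ : (0 : ℝ) < b := by linarith
  have hD₁ : |x 1 * D| * Q₂ ≤ |x 1| * (b / 2) := by
    rw [abs_mul, mul_assoc]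
    gcongr
    nlinarith [abs_nonneg θ₁]
  have hD₀ : b * |(act (!![w, a * s; N, b * s] * !![Q₁, -P₁; Q₂, -P₂]) x - y) 0| * Q₂ ≤
      |x 1| * (b * b / 2 + 1) := by
    rw [← abs_of_pos hb₀, ← abs_mul, h₀, abs_of_pos hb₀, abs_mul, mul_assoc]
    gcongr
    calc |a * D - θ₁| * Q₂ ≤ (|(a : ℝ)| * |D| + |θ₁|) * Q₂ := by
          gcongr
          exact (abs_sub _ _).trans_eq (by rw [abs_mul])
      _ ≤ (b * (b * |θ₁| / 2) + |θ₁|) * Q₂ := by gcongr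
      _ = (b * b / 2 + 1) * (|θ₁| * Q₂) := by ring
      _ ≤ b * b / 2 + 1 := mul_le_of_le_one_right (by positivity) hθ₁
  refine max_le ?_ ?_ <;> rw [le_div_iff₀ hQ₂']
  · refine le_of_mul_le_mul_left ?_ hb₀
    have hbb : (1 : ℝ) ≤ b * b := by nlinarith
    nlinarith [mul_le_mul_of_nonneg_left hbb (abs_nonneg (x 1)), abs_nonneg (x 1)]
  · rw [h₁]
    nlinarith [abs_nonneg (x 1)]

end Approximation

theorem exists_det_eq_one_of_consecutive_convergents {ξ c : ℝ} (hξ : |ξ| < 1)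
    {P₁ Q₁ P₂ Q₂ : ℤ} (hQ₁ : 0 < Q₁) (hQ : Q₁ ≤ Q₂) (hdet : IsUnit (P₁ * Q₂ - Q₁ * P₂))
    (hθ₁ : |Q₁ * ξ - P₁| * Q₂ ≤ 1) (hθ₂ : |Q₂ * ξ - P₂| * (Q₁ + Q₂) ≤ 1)
    {a b : ℤ} (hab : IsCoprime a b) (hb : 0 < b) (hab' : |a| ≤ b) (hc : 5 * b ≤ |c| * Q₁) :
    ∃ γ : Matrix (Fin 2) (Fin 2) ℤ, γ.det = 1 ∧ |c| / 2 * Q₁ * Q₂ ≤ mnorm γ ∧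
      mnorm γ ≤ 3 * |c| * Q₁ * Q₂ ∧
      ∀ x y : Fin 2 → ℝ, x 0 = ξ * x 1 → y 1 = c * x 1 → y 0 * b = y 1 * a →
        vnorm (act γ x - y) ≤ 2 * b * |x 1| / Q₂ := by
  set θ₁ : ℝ := Q₁ * ξ - P₁
  set θ₂ : ℝ := Q₂ * ξ - P₂
  -- `s = -det C` makes `det A = det C`, so `det (A * C) = (det C) ^ 2 = 1`.
  set s := -(P₁ * Q₂ - Q₁ * P₂)
  have hQ₁' : (1 : ℝ) ≤ Q₁ := by exact_mod_cast hQ₁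
  have hQ' : (Q₁ : ℝ) ≤ Q₂ := by exact_mod_cast hQ
  have hb' : (1 : ℝ) ≤ b := by exact_mod_cast hb
  have hs : |(s : ℝ)| = 1 := by
    rw [← Int.cast_abs, abs_neg, Int.isUnit_iff_abs_eq.1 hdet, Int.cast_one]
  have hθ₁' : 1 ≤ |θ₁| * (Q₁ + Q₂) := by
    refine one_le_abs_mul_add_of_abs_sub_eq_one (by linarith) (by linarith) ?_ hθ₂
    rw [← hs]
    congr 1
    push_cast [s, θ₁, θ₂]
    ring
  have hθ₁0 : θ₁ ≠ 0 := by
    rintro h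
    norm_num [h] at hθ₁'
  obtain ⟨N, ⟨w, hw⟩, hN⟩ := hab.exists_dvd_mul_sub_one_abs_mul_sub_le hb hθ₁0 (c - b * s * θ₂)
  rw [sub_sub_eq_add_sub] at hN
  have hbs : |(b : ℝ) * s| = b := by rw [abs_mul, hs, mul_one, abs_of_pos (by linarith)]
  obtain ⟨hNlow, hNup⟩ :=
    abs_mem_Icc_of_abs_mul_add_mul_sub_le hbs hN (by linarith) hQ' hθ₁ hθ₂ hθ₁'
  have hwN : |w| ≤ |N| + 1 := by
    refine le_of_mul_le_mul_left ?_ hb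
    calc b * |w| = |a * N - 1| := by rw [hw, abs_mul, abs_of_pos hb]
      _ ≤ |a| * |N| + 1 := (abs_sub _ _).trans_eq (by rw [abs_mul, abs_one])
      _ ≤ b * (|N| + 1) := by nlinarith [abs_nonneg N]
  have hP₁ := abs_le_of_abs_mul_sub_le_one hξ hQ₁ (by nlinarith [abs_nonneg θ₁])
  have hP₂ := abs_le_of_abs_mul_sub_le_one hξ (hQ₁.trans_le hQ) (by nlinarith [abs_nonneg θ₂])
  refine ⟨!![w, a * s; N, b * s] * !![Q₁, -P₁; Q₂, -P₂], ?_, ?_, ?_,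
    fun x y hx hy hslope ↦ vnorm_act_mul_sub_le hb hab' hw (hQ₁.trans_le hQ) hθ₁ hN hx hy hslope⟩
  · rw [det_mul, det_fin_two_of, det_fin_two_of]
    linear_combination (P₁ * Q₂ - Q₁ * P₂) ^ 2 * hw + Int.isUnit_mul_self hdet
  · calc |c| / 2 * Q₁ * Q₂ ≤ |(N : ℝ)| * Q₁ - b * Q₂ := by nlinarith
      _ = |(N : ℝ) * Q₁| - |(b : ℝ) * s * Q₂| := by
          rw [abs_mul, abs_mul, hbs, abs_of_pos (show (0 : ℝ) < Q₁ by linarith),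
            abs_of_pos (show (0 : ℝ) < Q₂ by linarith)]
      _ ≤ |(N : ℝ) * Q₁ + b * s * Q₂| := abs_sub_abs_le_abs_add _ _
      _ ≤ mnorm _ := by
          simpa [mul_fin_two] using
            abs_apply_le_mnorm (!![w, a * s; N, b * s] * !![Q₁, -P₁; Q₂, -P₂]) 1 0
  · calc mnorm _ ≤ (|(N : ℝ)| + 1) * Q₁ + b * Q₂ := by
          refine mnorm_mul_le (Fin.forall_fin_two.2 ⟨?_, ?_⟩) (Fin.forall_fin_two.2 ⟨?_, ?_⟩)
            (Fin.forall_fin_two.2 ⟨?_, ?_⟩) (Fin.forall_fin_two.2 ⟨?_, ?_⟩) <;>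
            simp only [of_apply, cons_val', cons_val_zero, cons_val_one, cons_val_fin_one,
              Int.cast_mul, Int.cast_neg, abs_neg, abs_mul, hs, mul_one] <;>
            norm_cast <;>
            simp [abs_of_pos hb, abs_of_pos hQ₁, abs_of_pos (hQ₁.trans_le hQ)]
      _ ≤ 3 * |c| * Q₁ * Q₂ := by nlinarith

/-- Lemma 5: for all sufficiently large `k` there is `γ ∈ SL(2, ℤ)` with
`(|y₂|/(2|x₂|)) q_{k-1} q_k ≤ |γ| ≤ (3|y₂|/|x₂|) q_{k-1} q_k` and `|γ x - y| ≤ 2b|x₂|/q_k`. -/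
theorem stmt14 (x y : Fin 2 → ℝ) (hx2 : x 1 ≠ 0) (hξ : Irrational (x 0 / x 1))
    (hξ1 : |x 0 / x 1| < 1) (hy2 : y 1 ≠ 0)
    (a b : ℤ) (hab : IsCoprime a b) (hb : 0 < b) (hab' : |a| ≤ b)
    (hslope : y 0 * (b : ℝ) = y 1 * (a : ℝ)) :
    ∃ K : ℕ, ∀ k : ℕ, K ≤ k → ∃ γ : Matrix (Fin 2) (Fin 2) ℤ,
      γ.det = 1 ∧
        (|y 1| / (2 * |x 1|)) * qden (x 0 / x 1) (k - 1) * qden (x 0 / x 1) k ≤ mnorm γ ∧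
        mnorm γ ≤ (3 * |y 1| / |x 1|) * qden (x 0 / x 1) (k - 1) * qden (x 0 / x 1) k ∧
        vnorm (act γ x - y) ≤ 2 * (b : ℝ) * |x 1| / qden (x 0 / x 1) k := by
  set ξ := x 0 / x 1
  set c := y 1 / x 1
  have hc : 0 < |c| := abs_pos.2 (div_ne_zero hy2 hx2)
  obtain ⟨M, hM⟩ :=
    eventually_atTop.1 ((tendsto_qden_atTop hξ).eventually_ge_atTop (5 * b / |c|))
  refine ⟨M + 1, fun k hk ↦ ?_⟩
  obtain ⟨n, rfl⟩ : ∃ n, k = n + 1 := ⟨k - 1, by omega⟩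
  obtain ⟨P₁, Q₁, P₂, Q₂, hQ₁, hQ₂, hQ₁pos, hQ, hdet, hθ₁, hθ₂⟩ :=
    exists_int_consecutive_convergents hξ n
  have hc5 : 5 * b ≤ |c| * Q₁ := by
    have := (div_le_iff₀ hc).1 (hQ₁ ▸ hM n (by omega))
    linarith
  obtain ⟨γ, hγ, hlow, hup, happrox⟩ := exists_det_eq_one_of_consecutive_convergents hξ1
    hQ₁pos hQ hdet hθ₁ hθ₂ hab hb hab' hc5
  have hc₁ : |y 1| / (2 * |x 1|) = |c| / 2 := by rw [abs_div]; ring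
  have hc₂ : 3 * |y 1| / |x 1| = 3 * |c| := by rw [abs_div]; ring
  refine ⟨γ, hγ, ?_, ?_, ?_⟩
  · rwa [Nat.add_sub_cancel, hc₁, hQ₁, hQ₂]
  · rwa [Nat.add_sub_cancel, hc₂, hQ₁, hQ₂]
  · rw [hQ₂]
    exact happrox x y (div_mul_cancel₀ _ hx2).symm (div_mul_cancel₀ _ hx2).symm hslope
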